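/- In the maximal volume algorithm, if row j of the current r×r submatrix A_l (chosen from the rows of an n×r matrix M) is replaced by row i of M, where b_{ij} is the (i,j) entry of B_l = M·A_l^{-1}, then det(A_{l+1}) = b_{ij} · det(A_l); hence if |b_{ij}| > 1 the volume strictly increases, and since all submatrix volumes are bounded above (by Hadamard's inequality), the sequence vol(A_l) converges. -/

import Mathlib

/-!
Write `A = M[S]` and `B = M A⁻¹`, so that `M = B A` and every row of `M` is a combination of the
rows of `A`: `M i = ∑ₖ B i k • A k`. Replacing row `j` of `A` by `M i` and expanding the
determinant multilinearly in that row, every term but `k = j` has a repeated row, so the new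
determinant is `B i j • det A`. Monotone sequences of volumes converge because there are only
finitely many `r × r` row selections, so the volumes are bounded.
-/

open Matrix BigOperators Filter

noncomputable def sval {m n : ℕ} (A : Matrix (Fin m) (Fin n) ℝ) (k : Fin n) : ℝ :=
  Real.sqrt ((show (Aᵀ * A).IsHermitian by simpa using Matrix.isHermitian_conjTranspose_mul_self A).eigenvalues
    (Tuple.sort (show (Aᵀ * A).IsHermitian by simpa using Matrix.isHermitian_conjTranspose_mul_self A).eigenvalues (Fin.rev k)))

noncomputable def chebNorm {m n : ℕ} (A : Matrix (Fin m) (Fin n) ℝ) : ℝ :=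
  ⨆ i, ⨆ j, |A i j|

noncomputable def frobNorm {m n : ℕ} (A : Matrix (Fin m) (Fin n) ℝ) : ℝ :=
  Real.sqrt (∑ i, ∑ j, (A i j) ^ 2)

namespace Matrix

variable {m ι R : Type*} [DecidableEq ι]

theorem submatrix_update_eq_updateRow (M : Matrix m ι R) (S : ι → m) (i : m) (j : ι) :
    M.submatrix (Function.update S j i) id = (M.submatrix S id).updateRow j (M i) := by
  ext k c
  rcases eq_or_ne k j with rfl | hk
  · simp
  · simp [hk]

variable [Fintype ι] [CommRing R]

theorem row_eq_sum_mul_inv_smul_row (M : Matrix m ι R) {A : Matrix ι ι R} (hA : IsUnit A)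
    (i : m) : M i = ∑ k, (M * A⁻¹) i k • A k := by
  have hMA : M * A⁻¹ * A = M := by
    rw [Matrix.mul_assoc, nonsing_inv_mul _ ((isUnit_iff_isUnit_det A).mp hA), Matrix.mul_one]
  rw [← vecMul_eq_sum, ← mul_apply_eq_vecMul, hMA]

theorem det_submatrix_update_eq_mul_det (M : Matrix m ι R) (S : ι → m)
    (hA : IsUnit (M.submatrix S id)) (i : m) (j : ι) :
    (M.submatrix (Function.update S j i) id).det
      = (M * (M.submatrix S id)⁻¹) i j * (M.submatrix S id).det := by
  rw [submatrix_update_eq_updateRow, row_eq_sum_mul_inv_smul_row M hA i, det_updateRow_sum,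
    smul_eq_mul]

end Matrix

theorem Monotone.exists_tendsto_of_finite_range {α : Type*} [ConditionallyCompleteLinearOrder α]
    [TopologicalSpace α] [OrderTopology α] {f : ℕ → α} (hf : Monotone f)
    (hfin : (Set.range f).Finite) : ∃ L, Tendsto f atTop (nhds L) :=
  ⟨_, tendsto_atTop_ciSup hf hfin.bddAbove⟩

theorem stmt18_general {n r : ℕ} (M : Matrix (Fin n) (Fin r) ℝ)
    (S : Fin r → Fin n)
    (hinv : IsUnit (M.submatrix S id)) (i : Fin n) (j : Fin r) :
    (M.submatrix (Function.update S j i) id).det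
        = (M * (M.submatrix S id)⁻¹) i j * (M.submatrix S id).det ∧
      (1 < |(M * (M.submatrix S id)⁻¹) i j| →
        |(M.submatrix S id).det| < |(M.submatrix (Function.update S j i) id).det|) ∧
      ∀ T : ℕ → (Fin r → Fin n),
        Monotone (fun l => |(M.submatrix (T l) id).det|) →
          ∃ L, Tendsto (fun l => |(M.submatrix (T l) id).det|) atTop (nhds L) := by
  have hdet := det_submatrix_update_eq_mul_det M S hinv i j
  refine ⟨hdet, fun hb => ?_, fun T hmono => hmono.exists_tendsto_of_finite_range ?_⟩
  · have hpos : 0 < |(M.submatrix S id).det| :=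
      abs_pos.mpr ((isUnit_iff_isUnit_det _).mp hinv).ne_zero
    rw [hdet, abs_mul]
    exact lt_mul_left hpos hb
  · set vol := fun U : Fin r → Fin n => |(M.submatrix U id).det|
    exact (Set.finite_range vol).subset (Set.range_comp_subset_range T vol)

theorem stmt18 {n r : ℕ} (hr : r < n) (M : Matrix (Fin n) (Fin r) ℝ)
    (S : Fin r → Fin n) (hS : Function.Injective S)
    (hinv : IsUnit (M.submatrix S id)) (i : Fin n) (j : Fin r) :
    (M.submatrix (Function.update S j i) id).det
        = (M * (M.submatrix S id)⁻¹) i j * (M.submatrix S id).det ∧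
      (1 < |(M * (M.submatrix S id)⁻¹) i j| →
        |(M.submatrix S id).det| < |(M.submatrix (Function.update S j i) id).det|) ∧
      ∀ T : ℕ → (Fin r → Fin n),
        Monotone (fun l => |(M.submatrix (T l) id).det|) →
          ∃ L, Tendsto (fun l => |(M.submatrix (T l) id).det|) atTop (nhds L) :=
  stmt18_general M S hinv i j
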